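/- Let E₃ be the ternary relation on ℝ defined by E₃(x₁,x₂,x₃) iff x₁ + x₃ − 2x₂ ≥ 0. Then for every n ≥ 1, the sequence (1, 2, 3, …, 2ⁿ) contains no E₃-indiscernible subsequence of length n + 2. -/
import Mathlib


/-- A finite sequence `a` is `E`-indiscernible for a `k`-ary relation `E` if `E` holds on all
increasing `k`-tuples from the sequence, or fails on all of them. -/
def IsIndiscernible {X : Type*} {k m : ℕ} (E : (Fin k → X) → Prop) (a : Fin m → X) : Prop :=
  (∀ s : Fin k → Fin m, StrictMono s → E (a ∘ s)) ∨
  (∀ s : Fin k → Fin m, StrictMono s → ¬ E (a ∘ s))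

/-- The ternary relation `E₃(x₁,x₂,x₃) ↔ x₁ + x₃ − 2x₂ ≥ 0` on ℝ. -/
def E3 (x : Fin 3 → ℝ) : Prop := 0 ≤ x 0 + x 2 - 2 * x 1

lemma triple_strictMono {m : ℕ} {i j k : Fin m} (hij : i < j) (hjk : j < k) :
    StrictMono ![i, j, k] := by
  rw [Fin.strictMono_iff_lt_succ]
  intro idx
  fin_cases idx <;> simpa [lt_trans hij hjk]

/-- For every `n ≥ 1`, the sequence `(1, 2, …, 2ⁿ)` contains no `E₃`-indiscernible
subsequence of length `n + 2`. -/
theorem powers_no_E3_indiscernible (n : ℕ) (hn : 1 ≤ n) :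
    ¬ ∃ t : Fin (n + 2) → Fin (2 ^ n), StrictMono t ∧
        IsIndiscernible E3 (fun j => ((t j : ℕ) + 1 : ℝ)) := by
  rintro ⟨t, ht, hind⟩
  set B : ℕ → ℕ := fun i => if h : i < n + 2 then (t ⟨i, h⟩ : ℕ) + 1 else 0 with hB
  have hBmono : ∀ i j : ℕ, i < j → j < n + 2 → B i < B j := by
    intro i j hij hj
    simp only [hB]
    rw [dif_pos (by omega : i < n + 2), dif_pos hj]
    have := ht (show (⟨i, by omega⟩ : Fin (n + 2)) < ⟨j, hj⟩ by simpa [Fin.lt_def])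
    omega
  have hBle : ∀ i : ℕ, i < n + 2 → B i ≤ 2 ^ n := by
    intro i hi
    simp only [hB]
    rw [dif_pos hi]
    exact Nat.succ_le_of_lt (t ⟨i, hi⟩).isLt
  have hBpos : ∀ i : ℕ, i < n + 2 → 1 ≤ B i := by
    intro i hi
    simp only [hB]
    rw [dif_pos hi]
    omega
  have hone : (1 : ℕ) ≤ 2 ^ n := Nat.one_le_two_pow
  have hEreal : ∀ (i j k : ℕ) (hi : i < n + 2) (hj : j < n + 2) (hk : k < n + 2),
      i < j → j < k →
      (E3 ((fun l => ((t l : ℕ) + 1 : ℝ)) ∘ ![⟨i, hi⟩, ⟨j, hj⟩, ⟨k, hk⟩]) ↔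
        ((B i : ℝ) + B k - 2 * B j ≥ 0)) := by
    intro i j k hi hj hk hij hjk
    simp only [E3, Function.comp, Matrix.cons_val_zero, Matrix.cons_val_one, Matrix.head_cons,
      Matrix.cons_val_two, Matrix.tail_cons, hB]
    rw [dif_pos hi, dif_pos hj, dif_pos hk]
    push_cast
    constructor <;> intro h <;> linarith
  cases hind with
  | inl hE =>
    have hstep : ∀ (i j k : ℕ), i < j → j < k → k < n + 2 → 2 * B j ≤ B i + B k := by
      intro i j k hij hjk hk
      have hi : i < n + 2 := by omega
      have hj : j < n + 2 := by omega
      have h := hE _ (triple_strictMono (i := ⟨i, hi⟩) (j := ⟨j, hj⟩) (k := ⟨k, hk⟩)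
        (by simpa [Fin.lt_def]) (by simpa [Fin.lt_def]))
      rw [hEreal i j k hi hj hk hij hjk] at h
      have h2 : (2 * B j : ℝ) ≤ (B i : ℝ) + B k := by linarith
      exact_mod_cast h2
    have key : ∀ j : ℕ, j + 1 ≤ n + 1 → B 0 + 2 ^ j ≤ B (j + 1) := by
      intro j
      induction j with
      | zero =>
        intro hj
        have := hBmono 0 (0 + 1) (by omega) (by omega)
        simpa using this
      | succ j ih =>
        intro hj
        have h1 := ih (by omega)
        have h2 := hstep 0 (j + 1) (j + 1 + 1) (by omega) (by omega) (by omega)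
        have hp : 2 ^ (j + 1) = 2 * 2 ^ j := by ring
        omega
    have h1 := key n (by omega)
    have h2 := hBle (n + 1) (by omega)
    have h3 := hBpos 0 (by omega)
    omega
  | inr hE =>
    have hstep : ∀ (i j k : ℕ), i < j → j < k → k < n + 2 → B i + B k + 1 ≤ 2 * B j := by
      intro i j k hij hjk hk
      have hi : i < n + 2 := by omega
      have hj : j < n + 2 := by omega
      have h := hE _ (triple_strictMono (i := ⟨i, hi⟩) (j := ⟨j, hj⟩) (k := ⟨k, hk⟩)
        (by simpa [Fin.lt_def]) (by simpa [Fin.lt_def]))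
      rw [hEreal i j k hi hj hk hij hjk] at h
      have h2 : (B i : ℝ) + B k < 2 * B j := by linarith
      have h3 : B i + B k < 2 * B j := by exact_mod_cast h2
      omega
    have key : ∀ j : ℕ, j ≤ n + 1 → B (n + 1 - j) + 2 ^ j ≤ B (n + 1) + 1 := by
      intro j
      induction j with
      | zero => intro _; simp
      | succ j ih =>
        intro hj
        rcases Nat.eq_zero_or_pos j with hj0 | hj1
        · subst hj0
          have hm := hBmono n (n + 1) (by omega) (by omega)
          have he : n + 1 - (0 + 1) = n := by omega
          rw [he]
          have hp : 2 ^ (0 + 1) = 2 := by norm_num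
          omega
        · have h1 := ih (by omega)
          have h2 := hstep (n - j) (n + 1 - j) (n + 1) (by omega) (by omega) (by omega)
          have he : n + 1 - (j + 1) = n - j := by omega
          have hp : 2 ^ (j + 1) = 2 * 2 ^ j := by ring
          rw [he]
          omega
    have h1 := key (n + 1) (by omega)
    have h2 := hBle (n + 1) (by omega)
    have h3 := hBpos (n + 1 - (n + 1)) (by omega)
    have hp : 2 ^ (n + 1) = 2 * 2 ^ n := by ring
    omega
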